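/- arXiv:2104.04637 — 3 statements merged into one kernel-verified Lean document; each statement's English description precedes it below -/
import Mathlib

section
/- Let M, Q be n×n matrices over F_2 with Q·M^s = Q for all s ≥ 1 and MQ = QM, and suppose the j-th column of Q is zero. Let A = M + R₀Q, B = M^α + R₁Q for matrices R₀, R₁ and positive integer α. Then for all positive integers β and any matrix R₂, with Y = A^β + R₂RQ for any matrix R, the j-th columns of Y^α and B^β both equal the j-th column of M^{αβ}. -/
private lemma pow_form {n : ℕ} (M Q : Matrix (Fin n) (Fin n) (ZMod 2))
    (hQM : ∀ s : ℕ, 1 ≤ s → Q * M ^ s = Q)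
    (γ : ℕ) (hγ : 1 ≤ γ) (E : Matrix (Fin n) (Fin n) (ZMod 2)) :
    ∀ δ : ℕ, ∃ F, (M ^ γ + E * Q) ^ δ = M ^ (γ * δ) + F * Q := by
  intro δ
  induction δ with
  | zero => exact ⟨0, by simp⟩
  | succ d ih =>
    obtain ⟨F, hF⟩ := ih
    refine ⟨M ^ (γ * d) * E + F + F * Q * E, ?_⟩
    have hq : Q * M ^ γ = Q := hQM γ hγ
    rw [pow_succ, hF]
    rw [show γ * (d + 1) = γ * d + γ by ring, pow_add, add_mul, mul_add,
      mul_add, mul_assoc F Q (M ^ γ), hq]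
    noncomm_ring

theorem stmt_12 (n : ℕ) (M Q : Matrix (Fin n) (Fin n) (ZMod 2))
    (hQM : ∀ s : ℕ, 1 ≤ s → Q * M ^ s = Q) (hcomm : M * Q = Q * M)
    (j : Fin n) (hQj : ∀ i, Q i j = 0)
    (R₀ R₁ : Matrix (Fin n) (Fin n) (ZMod 2)) (α : ℕ) (hα : 1 ≤ α)
    (A B : Matrix (Fin n) (Fin n) (ZMod 2))
    (hA : A = M + R₀ * Q) (hB : B = M ^ α + R₁ * Q) :
    ∀ (β : ℕ), 1 ≤ β → ∀ R₂ R : Matrix (Fin n) (Fin n) (ZMod 2),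
      ∀ Y : Matrix (Fin n) (Fin n) (ZMod 2), Y = A ^ β + R₂ * (R * Q) →
        ∀ i, (Y ^ α) i j = (M ^ (α * β)) i j ∧ (B ^ β) i j = (M ^ (α * β)) i j := by
  intro β hβ R₂ R Y hY i
  have colzero : ∀ (G : Matrix (Fin n) (Fin n) (ZMod 2)), (G * Q) i j = 0 := by
    intro G
    simp [Matrix.mul_apply, hQj]
  -- A^β = M^β + F₀ Q
  obtain ⟨F₀, hF₀⟩ := pow_form M Q hQM 1 le_rfl R₀ β
  rw [pow_one] at hF₀
  rw [← hA] at hF₀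
  have hYeq : Y = M ^ β + (F₀ + R₂ * R) * Q := by
    rw [hY, hF₀, one_mul] at *
    noncomm_ring
  obtain ⟨G, hG⟩ := pow_form M Q hQM β hβ (F₀ + R₂ * R) α
  obtain ⟨H, hH⟩ := pow_form M Q hQM α hα R₁ β
  rw [← hB] at hH
  constructor
  · rw [hYeq, hG, show β * α = α * β by ring, Matrix.add_apply, colzero, add_zero]
  · rw [hH, Matrix.add_apply, colzero, add_zero]
end

section
/- Let M, Q be n×n matrices over F_2 with Q·M^s = Q for all s ≥ 1 and MQ = QM, M invertible of multiplicative order φ, and the j-th column of Q is zero. Let A = M + R₀Q, B = M^α + R₁Q, and X = A^θ B^ϑ for positive integers θ, ϑ, α. Then the j-th column of X equals the j-th column of M^{θ + αϑ}. -/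
private lemma pow_add_mulQ {n : ℕ} (M Q : Matrix (Fin n) (Fin n) (ZMod 2))
    (hQM : ∀ s : ℕ, 1 ≤ s → Q * M ^ s = Q)
    (R : Matrix (Fin n) (Fin n) (ZMod 2)) (a : ℕ) (ha : 1 ≤ a) :
    ∀ k : ℕ, ∃ S, (M ^ a + R * Q) ^ k = M ^ (a * k) + S * Q := by
  intro k
  induction k with
  | zero => exact ⟨0, by simp⟩
  | succ k ih =>
    obtain ⟨S, hS⟩ := ih
    refine ⟨M ^ (a * k) * R + S + S * Q * R, ?_⟩
    have hq : Q * M ^ a = Q := hQM a ha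
    rw [pow_succ, hS, add_mul, mul_add, mul_add, mul_assoc S Q (M ^ a), hq,
      ← pow_add, Nat.mul_add a k 1, Nat.mul_one]
    noncomm_ring

theorem stmt_13 (n : ℕ) (M Q : Matrix (Fin n) (Fin n) (ZMod 2))
    (hMunit : IsUnit M) (φ : ℕ) (hφ : orderOf M = φ)
    (hQM : ∀ s : ℕ, 1 ≤ s → Q * M ^ s = Q) (hcomm : M * Q = Q * M)
    (j : Fin n) (hQj : ∀ i, Q i j = 0)
    (R₀ R₁ : Matrix (Fin n) (Fin n) (ZMod 2)) (α θ ϑ : ℕ)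
    (hα : 1 ≤ α) (hθ : 1 ≤ θ) (hϑ : 1 ≤ ϑ)
    (A B X : Matrix (Fin n) (Fin n) (ZMod 2))
    (hA : A = M + R₀ * Q) (hB : B = M ^ α + R₁ * Q)
    (hX : X = A ^ θ * B ^ ϑ) :
    ∀ i, X i j = (M ^ (θ + α * ϑ)) i j := by
  obtain ⟨S₀, hS₀⟩ := pow_add_mulQ M Q hQM R₀ 1 le_rfl θ
  obtain ⟨S₁, hS₁⟩ := pow_add_mulQ M Q hQM R₁ α hα ϑ
  have hq : Q * M ^ (α * ϑ) = Q := hQM _ (Nat.one_le_iff_ne_zero.2 (by positivity))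
  have hXeq : X = M ^ (θ + α * ϑ) + (M ^ θ * S₁ + S₀ + S₀ * Q * S₁) * Q := by
    rw [hX, hA, hB]
    simp only [pow_one, one_mul] at hS₀
    rw [hS₀, hS₁, add_mul, mul_add, mul_add, mul_assoc S₀ Q (M ^ (α*ϑ)), hq,
      ← pow_add]
    noncomm_ring
  intro i
  rw [hXeq]
  have : ((M ^ θ * S₁ + S₀ + S₀ * Q * S₁) * Q) i j = 0 := by
    simp [Matrix.mul_apply, hQj]
  simp [Matrix.add_apply, this]
end

section
/- Let M be invertible of multiplicative order φ, Q with Q·M^s = Q for all s ≥ 1, MQ = QM, j-th column of Q zero. Let A = M + R₀Q, B = M^α + R₁Q, X = A^θB^ϑ, Y = X^e for a positive integer e, and let d be a positive integer with e·d ≡ 1 (mod φ). Then the j-th column of Y^d equals the j-th column of X. -/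
theorem stmt_14 (n : ℕ) (M Q : Matrix (Fin n) (Fin n) (ZMod 2))
    (hMunit : IsUnit M) (φ : ℕ) (hφ : orderOf M = φ) (hφpos : 0 < φ)
    (hQM : ∀ s : ℕ, 1 ≤ s → Q * M ^ s = Q) (hcomm : M * Q = Q * M)
    (j : Fin n) (hQj : ∀ i, Q i j = 0)
    (R₀ R₁ : Matrix (Fin n) (Fin n) (ZMod 2)) (α θ ϑ e d : ℕ)
    (hα : 1 ≤ α) (hθ : 1 ≤ θ) (hϑ : 1 ≤ ϑ) (he : 1 ≤ e) (hd : 1 ≤ d)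
    (hed : e * d ≡ 1 [MOD φ])
    (A B X Y : Matrix (Fin n) (Fin n) (ZMod 2))
    (hA : A = M + R₀ * Q) (hB : B = M ^ α + R₁ * Q)
    (hX : X = A ^ θ * B ^ ϑ) (hY : Y = X ^ e) :
    ∀ i, (Y ^ d) i j = X i j := by
  have hQM' : ∀ s : ℕ, Q * M ^ s = Q := by
    intro s
    cases s with
    | zero => simp
    | succ s => exact hQM _ (Nat.succ_le_succ (Nat.zero_le _))
  have mul_form : ∀ (a b : ℕ) (S T : Matrix (Fin n) (Fin n) (ZMod 2)),
      (M ^ a + S * Q) * (M ^ b + T * Q)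
        = M ^ (a + b) + (M ^ a * T + S + S * Q * T) * Q := by
    intro a b S T
    have h1 : S * Q * M ^ b = S * Q := by rw [mul_assoc, hQM' b]
    rw [add_mul, mul_add, mul_add, h1, pow_add]
    noncomm_ring
  have pow_form : ∀ (a : ℕ) (S : Matrix (Fin n) (Fin n) (ZMod 2)) (k : ℕ),
      ∃ T, (M ^ a + S * Q) ^ k = M ^ (a * k) + T * Q := by
    intro a S k
    induction k with
    | zero => exact ⟨0, by simp⟩
    | succ k ih =>
      obtain ⟨T, hT⟩ := ih
      refine ⟨M ^ (a * k) * S + T + T * Q * S, ?_⟩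
      rw [pow_succ, hT, mul_form, Nat.mul_succ]
  have hA1 : A = M ^ 1 + R₀ * Q := by rw [hA, pow_one]
  obtain ⟨S1, hS1⟩ := pow_form 1 R₀ θ
  rw [one_mul] at hS1
  obtain ⟨S2, hS2⟩ := pow_form α R₁ ϑ
  have hXf : X = M ^ (θ + α * ϑ) + (M ^ θ * S2 + S1 + S1 * Q * S2) * Q := by
    rw [hX, hA1, hB, hS1, hS2, mul_form]
  obtain ⟨S4, hS4⟩ := pow_form (θ + α * ϑ) (M ^ θ * S2 + S1 + S1 * Q * S2) e
  rw [← hXf, ← hY] at hS4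
  obtain ⟨S5, hS5⟩ := pow_form ((θ + α * ϑ) * e) S4 d
  rw [← hS4] at hS5
  have hexp : M ^ ((θ + α * ϑ) * e * d) = M ^ (θ + α * ϑ) := by
    set m := θ + α * ϑ with hm
    have hmod : m ≡ m * e * d [MOD φ] := by
      calc m ≡ m * 1 [MOD φ] := by rw [mul_one]
        _ ≡ m * (e * d) [MOD φ] := (Nat.ModEq.mul_left _ hed).symm
        _ = m * e * d := by ring
    have hle : m ≤ m * e * d := by
      calc m = m * 1 * 1 := by ring
        _ ≤ m * e * d := by
            exact Nat.mul_le_mul (Nat.mul_le_mul_left _ he) hd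
    obtain ⟨k, hk⟩ := (Nat.modEq_iff_dvd' hle).mp hmod
    have : m * e * d = m + φ * k := by omega
    rw [this, pow_add, pow_mul, ← hφ, pow_orderOf_eq_one, one_pow, mul_one]
  have hcol : ∀ (S : Matrix (Fin n) (Fin n) (ZMod 2)) (i : Fin n),
      (S * Q) i j = 0 := by
    intro S i
    simp [Matrix.mul_apply, hQj]
  intro i
  rw [hS5, hXf, Matrix.add_apply, Matrix.add_apply, hcol, hcol, hexp]
end
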